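/- arXiv:2406.17054 — 10 statements merged into one kernel-verified Lean document; each statement's English description precedes it below -/
import Mathlib

section
/- Let W be a measurable space, p > 0 and b ∈ [1,2]. Let ν be a nonzero finite signed measure on W, let σ = dν/d|ν| be the Radon–Nikodym derivative of ν with respect to its total variation measure |ν| (so σ takes values ±1 |ν|-a.e.), and let μ be the pushforward of the probability measure ‖ν‖_TV^{-1}·|ν| under the map w ↦ ( σ(w)·‖ν‖_TV^{1/p}, w ) from W to ℝ × W. Then μ is a Borel probability measure on ℝ × W satisfying: (a) ∫_{ℝ×A} sign(r)·|r|^p dμ(r,w) = ν(A) for every measurable A ⊆ W, i.e. the signed p-homogeneous projection of μ equals ν; and (b) ( ∫ |r|^{pb} dμ(r,w) )^{2/b} = ‖ν‖_TV². -/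
/-!
Let `T = |ν|` and `c = ‖ν‖_TV = T(W)`. Since `ν = σ • T` with `|σ| = 1` `T`-a.e., the atom
`r = σ(w) c^(1/p)` placed above `w` satisfies `sign(r) |r|^p = σ(w) c`, so integrating over the
probability `c⁻¹ • T` returns `∫_A σ dT = ν(A)`; and `|r|^(pb) = c^b` is constant, so
`(∫ |r|^(pb) dμ)^(2/b) = c^2`.
-/

open MeasureTheory

lemma Real.measurable_sign : Measurable Real.sign :=
  Measurable.ite measurableSet_Iio measurable_const
    (Measurable.ite measurableSet_Ioi measurable_const measurable_const)

lemma Real.sign_mul_abs_rpow_of_abs_eq_one {s t : ℝ} (p : ℝ) (hs : |s| = 1) (ht : 0 < t) :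
    Real.sign (s * t) * |s * t| ^ p = s * t ^ p := by
  rcases abs_eq zero_le_one |>.mp hs with rfl | rfl
  · simp [Real.sign_of_pos ht, abs_of_pos ht]
  · simp [Real.sign_of_neg (neg_neg_of_pos ht), abs_of_pos ht]

namespace MeasureTheory

lemma Measure.MutuallySingular.ae_rnDeriv_add {α : Type*} [MeasurableSpace α] {μ ν : Measure α}
    [SigmaFinite μ] [SigmaFinite ν] (h : μ ⟂ₘ ν) :
    ∀ᵐ x ∂μ, μ.rnDeriv (μ + ν) x = 1 ∧ ν.rnDeriv (μ + ν) x = 0 := by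
  filter_upwards [Measure.rnDeriv_add_right_of_mutuallySingular (μ := μ) h, μ.rnDeriv_self,
    Measure.rnDeriv_eq_zero_of_mutuallySingular h.symm
      (Measure.AbsolutelyContinuous.rfl.add_right ν)] with x hadd hself hzero
  exact ⟨hadd.trans hself, hzero⟩

namespace SignedMeasure

variable {W : Type*} [MeasurableSpace W] (ν : SignedMeasure W)

lemma abs_rnDeriv_totalVariation :
    ∀ᵐ w ∂ν.totalVariation, |ν.rnDeriv ν.totalVariation w| = 1 := by
  have hPN := ν.toJordanDecomposition.mutuallySingular
  simp only [totalVariation, rnDeriv_def, ae_add_measure_iff]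
  constructor
  · filter_upwards [hPN.ae_rnDeriv_add] with w ⟨hP, hN⟩
    simp [hP, hN]
  · rw [add_comm]
    filter_upwards [hPN.symm.ae_rnDeriv_add] with w ⟨hN, hP⟩
    simp [hP, hN]

lemma setIntegral_rnDeriv_totalVariation {A : Set W} (hA : MeasurableSet A) :
    ∫ w in A, ν.rnDeriv ν.totalVariation w ∂ν.totalVariation = ν A := by
  have hac : ν ≪ᵥ ν.totalVariation.toENNRealVectorMeasure := by
    rw [absolutelyContinuous_ennreal_iff, VectorMeasure.ennrealToMeasure_toENNRealVectorMeasure]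
  rw [← withDensityᵥ_apply (integrable_rnDeriv ν _) hA, withDensityᵥ_rnDeriv_eq ν _ hac]

lemma totalVariation_ne_zero {ν : SignedMeasure W} (hν : ν ≠ 0) : ν.totalVariation ≠ 0 := by
  refine fun h => hν (VectorMeasure.ext fun A _ => ?_)
  exact ν.null_of_totalVariation_zero (by simp [h])

end SignedMeasure

section LiftToGraph

variable {W : Type*} [MeasurableSpace W] {Q : Measure W} {σ : W → ℝ} {t : ℝ}

lemma setIntegral_sign_mul_abs_rpow_map_graph (p : ℝ) (hσm : Measurable σ)
    (hσ : ∀ᵐ w ∂Q, |σ w| = 1) (ht : 0 < t) {A : Set W} (hA : MeasurableSet A) :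
    ∫ x in {x : ℝ × W | x.2 ∈ A}, Real.sign x.1 * |x.1| ^ p ∂Q.map (fun w => (σ w * t, w))
      = t ^ p * ∫ w in A, σ w ∂Q := by
  have hg : Measurable fun x : ℝ × W => Real.sign x.1 * |x.1| ^ p :=
    (Real.measurable_sign.comp measurable_fst).mul (measurable_fst.abs.pow_const p)
  have hs : MeasurableSet {x : ℝ × W | x.2 ∈ A} := measurable_snd hA
  rw [setIntegral_map hs hg.aestronglyMeasurable
    (by fun_prop : Measurable fun w => (σ w * t, w)).aemeasurable, ← integral_const_mul]
  refine setIntegral_congr_ae hA (hσ.mono fun w hw _ => ?_)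
  rw [Real.sign_mul_abs_rpow_of_abs_eq_one p hw ht, mul_comm]

lemma integral_abs_rpow_map_graph [IsProbabilityMeasure Q] (q : ℝ) (hσm : Measurable σ)
    (hσ : ∀ᵐ w ∂Q, |σ w| = 1) (ht : 0 ≤ t) :
    ∫ x, |x.1| ^ q ∂Q.map (fun w => (σ w * t, w)) = t ^ q := by
  have hconst : ∀ᵐ w ∂Q, |σ w * t| ^ q = t ^ q :=
    hσ.mono fun w hw => by rw [abs_mul, hw, one_mul, abs_of_nonneg ht]
  rw [integral_map (by fun_prop : Measurable fun w => (σ w * t, w)).aemeasurable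
    (measurable_fst.abs.pow_const q).aestronglyMeasurable, integral_congr_ae hconst]
  simp

end LiftToGraph

end MeasureTheory

/-- attainment half of Lemma F.1.
For a nonzero finite signed measure `ν`, with `σ = dν/d|ν|`, the pushforward `μ` of
`‖ν‖_TV⁻¹ • |ν|` under `w ↦ (σ w · ‖ν‖_TV^(1/p), w)` is a probability measure whose signed
`p`-homogeneous projection is `ν`, and `(∫ |r|^(p*b) dμ)^(2/b) = ‖ν‖_TV ^ 2`. -/
theorem stmt_1 {W : Type*} [MeasurableSpace W]
    (p b : ℝ) (hp : 0 < p) (hb : b ∈ Set.Icc (1 : ℝ) 2)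
    (ν : SignedMeasure W) (hν : ν ≠ 0)
    (σ : W → ℝ) (hσ : σ = ν.rnDeriv ν.totalVariation)
    (μ : Measure (ℝ × W))
    (hμ : μ = Measure.map
        (fun w => (σ w * ((ν.totalVariation Set.univ).toReal) ^ ((1 : ℝ) / p), w))
        ((ν.totalVariation Set.univ)⁻¹ • ν.totalVariation)) :
    IsProbabilityMeasure μ ∧
    (∀ A : Set W, MeasurableSet A →
      ∫ x in {x : ℝ × W | x.2 ∈ A}, Real.sign x.1 * |x.1| ^ p ∂μ = ν A) ∧
    (∫ x : ℝ × W, |x.1| ^ (p * b) ∂μ) ^ ((2 : ℝ) / b)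
      = ((ν.totalVariation Set.univ).toReal) ^ 2 := by
  set T := ν.totalVariation
  have : NeZero T := ⟨SignedMeasure.totalVariation_ne_zero hν⟩
  have hc : 0 < (T Set.univ).toReal :=
    ENNReal.toReal_pos (NeZero.ne _) (measure_ne_top T _)
  have hσm : Measurable σ := hσ ▸ SignedMeasure.measurable_rnDeriv ν T
  have hσ1 : ∀ᵐ w ∂(T Set.univ)⁻¹ • T, |σ w| = 1 :=
    Measure.ae_smul_measure (hσ ▸ ν.abs_rnDeriv_totalVariation) _
  have ht : 0 < (T Set.univ).toReal ^ ((1 : ℝ) / p) := Real.rpow_pos_of_pos hc _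
  have hb0 : b ≠ 0 := (zero_lt_one.trans_le hb.1).ne'
  subst hμ
  refine ⟨Measure.isProbabilityMeasure_map (by fun_prop), fun A hA => ?_, ?_⟩
  · rw [setIntegral_sign_mul_abs_rpow_map_graph p hσm hσ1 ht hA, ← Real.rpow_mul hc.le,
      Measure.restrict_smul, integral_smul_measure, hσ, ν.setIntegral_rnDeriv_totalVariation hA,
      one_div_mul_cancel hp.ne', Real.rpow_one, ENNReal.toReal_inv, smul_eq_mul,
      mul_inv_cancel_left₀ hc.ne']
  · rw [integral_abs_rpow_map_graph _ hσm hσ1 ht.le, ← Real.rpow_mul hc.le,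
      ← Real.rpow_mul hc.le, show 1 / p * (p * b) * (2 / b) = (2 : ℕ) by field_simp; norm_num,
      Real.rpow_natCast]
end

section
/- Let W be a compact metric space equipped with a finite Borel measure vol of full support (e.g. the Riemannian volume of a compact manifold). Let h : W → ℝ be continuous, and let β > 0 and λ' > 0. If sup_{w ∈ W} |h(w)| > λ', then ∫_W ∫_ℝ exp( −β·( r·h(w) + λ'·|r| ) ) dr dvol(w) = +∞, where dr denotes Lebesgue measure on ℝ. -/
/-!
If `c ≤ |a|`, then on the half-line `{r | r * a ≤ 0}` the exponent `-β (r a + c |r|)` equals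
`β |r| (|a| - c) ≥ 0`, so the integrand is at least `1` on a set of infinite Lebesgue measure and
the inner integral is `+∞`. By continuity of `h`, this happens on the nonempty open set
`{w | λ' < |h w|}`, which has positive measure because `vol` has full support.
-/

open MeasureTheory

theorem mul_measure_le_lintegral_of_forall_mem_le {α : Type*} [MeasurableSpace α]
    {μ : Measure α} {s : Set α} {f : α → ENNReal} {c : ENNReal} (hs : MeasurableSet s)
    (hf : ∀ x ∈ s, c ≤ f x) : c * μ s ≤ ∫⁻ x, f x ∂μ :=
  (lintegral_indicator_const hs c).symm.trans_le (lintegral_mono (Set.indicator_le hf))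

theorem lintegral_eq_top_of_forall_mem_le {α : Type*} [MeasurableSpace α]
    {μ : Measure α} {s : Set α} {f : α → ENNReal} {c : ENNReal} (hs : MeasurableSet s)
    (hcs : c * μ s = ⊤) (hf : ∀ x ∈ s, c ≤ f x) : ∫⁻ x, f x ∂μ = ⊤ :=
  top_le_iff.mp (hcs ▸ mul_measure_le_lintegral_of_forall_mem_le hs hf)

theorem Real.volume_setOf_mul_nonpos (a : ℝ) : volume {r : ℝ | r * a ≤ 0} = ⊤ := by
  rcases le_total 0 a with ha | ha
  · exact measure_mono_top (fun r (hr : r ≤ 0) ↦ mul_nonpos_of_nonpos_of_nonneg hr ha)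
      Real.volume_Iic
  · exact measure_mono_top (fun r (hr : 0 ≤ r) ↦ mul_nonpos_of_nonneg_of_nonpos hr ha)
      Real.volume_Ici

theorem Real.lintegral_exp_neg_mul_add_abs_eq_top {a c β : ℝ} (hβ : 0 ≤ β) (hc : c ≤ |a|) :
    ∫⁻ r, ENNReal.ofReal (Real.exp (-β * (r * a + c * |r|))) = ⊤ := by
  refine lintegral_eq_top_of_forall_mem_le (s := {r | r * a ≤ 0})
    (measurableSet_le (by fun_prop) measurable_const)
    (by rw [one_mul, Real.volume_setOf_mul_nonpos]) fun r (hr : r * a ≤ 0) ↦ ?_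
  have hra : r * a = -(|r| * |a|) := by rw [← abs_mul, abs_of_nonpos hr, neg_neg]
  have hexp : -β * (r * a + c * |r|) = β * (|r| * (|a| - c)) := by rw [hra]; ring
  rw [hexp]
  exact ENNReal.one_le_ofReal.mpr <| Real.one_le_exp <|
    mul_nonneg hβ (mul_nonneg (abs_nonneg r) (sub_nonneg.mpr hc))

theorem stmt_3_general {W : Type*} [MetricSpace W]
    [MeasurableSpace W] [BorelSpace W]
    (vol : Measure W) [Measure.IsOpenPosMeasure vol]
    (h : W → ℝ) (hc : Continuous h)
    (β lam' : ℝ) (hβ : 0 < β)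
    (hsup : ∃ w₀ : W, lam' < |h w₀|) :
    ∫⁻ w, (∫⁻ r, ENNReal.ofReal (Real.exp (-β * (r * h w + lam' * |r|)))
        ∂(volume : Measure ℝ)) ∂vol = ⊤ := by
  have hU : IsOpen {w | lam' < |h w|} := isOpen_lt continuous_const (continuous_abs.comp hc)
  refine lintegral_eq_top_of_forall_mem_le hU.measurableSet
    (ENNReal.top_mul (hU.measure_ne_zero vol hsup)) fun w hw ↦ ?_
  exact (Real.lintegral_exp_neg_mul_add_abs_eq_top hβ.le hw.le).ge

/-- analytic core of the second bullet of Proposition 3.2.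
On a compact metric space `W` with a finite Borel measure `vol` of full support, if `h` is
continuous and `sup |h| > λ'`, then `∫_W ∫_ℝ exp(−β(r·h(w) + λ'·|r|)) dr dvol(w) = +∞`. -/
theorem stmt_3 {W : Type*} [MetricSpace W] [CompactSpace W]
    [MeasurableSpace W] [BorelSpace W]
    (vol : Measure W) [IsFiniteMeasure vol] [Measure.IsOpenPosMeasure vol]
    (h : W → ℝ) (hc : Continuous h)
    (β lam' : ℝ) (hβ : 0 < β) (hlam' : 0 < lam')
    (hsup : ∃ w₀ : W, lam' < |h w₀|) :
    ∫⁻ w, (∫⁻ r, ENNReal.ofReal (Real.exp (-β * (r * h w + lam' * |r|)))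
        ∂(volume : Measure ℝ)) ∂vol = ⊤ :=
  stmt_3_general vol h hc β lam' hβ hsup
end

section
/- Let W be a measurable space and ν a nonzero finite signed measure on W. Let η* = ‖ν‖_TV^{-1}·|ν|, a Borel probability measure on W. Then |ν| is absolutely continuous with respect to η*, and ∫ (dν/dη*)² dη* = ‖ν‖_TV², where dν/dη* is the Radon–Nikodym derivative of ν with respect to η*. -/
/-!
The Jordan parts `ν⁺`, `ν⁻` of `ν` are mutually singular and `|ν| = ν⁺ + ν⁻`, so
`dν/d|ν| = dν⁺/d|ν| - dν⁻/d|ν|` is `1` a.e. on `ν⁺` and `-1` a.e. on `ν⁻`. Rescaling the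
reference measure to `η* = ‖ν‖_TV⁻¹ • |ν|` multiplies the density by `‖ν‖_TV`, so
`(dν/dη*)²` is the constant `‖ν‖_TV²` and integrates to it against the probability measure `η*`.
-/

open MeasureTheory
open scoped ENNReal

namespace MeasureTheory

variable {α : Type*} [MeasurableSpace α]

namespace Measure

variable {μ ν : Measure α}

lemma MutuallySingular.rnDeriv_add_ae_eq_one [SigmaFinite μ] [SigmaFinite ν] (h : μ ⟂ₘ ν) :
    μ.rnDeriv (μ + ν) =ᵐ[μ] 1 := by
  have hμ : μ ≪ μ + ν := AbsolutelyContinuous.rfl.add_right ν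
  filter_upwards [hμ.ae_le (rnDeriv_add' μ ν (μ + ν)), hμ.ae_le (rnDeriv_self (μ + ν)),
    rnDeriv_eq_zero_of_mutuallySingular h.symm hμ] with x hsum hone hzero
  simpa [hone, hzero] using hsum.symm

end Measure

namespace SignedMeasure

lemma totalVariation_eq_zero_iff {s : SignedMeasure α} : s.totalVariation = 0 ↔ s = 0 := by
  refine ⟨fun h ↦ ?_, fun h ↦ h ▸ totalVariation_zero⟩
  ext i
  exact s.null_of_totalVariation_zero (by simp [h])

lemma abs_rnDeriv_totalVariation_s5 (s : SignedMeasure α) :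
    ∀ᵐ x ∂s.totalVariation, |s.rnDeriv s.totalVariation x| = 1 := by
  set p := s.toJordanDecomposition.posPart
  set n := s.toJordanDecomposition.negPart
  have hpn : p ⟂ₘ n := s.toJordanDecomposition.mutuallySingular
  change ∀ᵐ x ∂(p + n), |s.rnDeriv (p + n) x| = 1
  rw [ae_add_measure_iff]
  constructor
  · filter_upwards [hpn.rnDeriv_add_ae_eq_one, Measure.rnDeriv_eq_zero_of_mutuallySingular
      hpn.symm (Measure.AbsolutelyContinuous.rfl.add_right n)] with x hp hn
    simp [rnDeriv_def, p, n, hp, hn]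
  · rw [add_comm p n]
    filter_upwards [hpn.symm.rnDeriv_add_ae_eq_one, Measure.rnDeriv_eq_zero_of_mutuallySingular
      hpn (Measure.AbsolutelyContinuous.rfl.add_right p)] with x hn hp
    simp [rnDeriv_def, p, n, hp, hn]

lemma rnDeriv_smul_right_of_ne_top (s : SignedMeasure α) (μ : Measure α) [SigmaFinite μ]
    {r : ℝ≥0∞} (hr : r ≠ 0) (hr_top : r ≠ ∞) :
    s.rnDeriv (r • μ) =ᵐ[μ] r⁻¹.toReal • s.rnDeriv μ := by
  filter_upwards [Measure.rnDeriv_smul_right_of_ne_top s.toJordanDecomposition.posPart μ hr hr_top,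
    Measure.rnDeriv_smul_right_of_ne_top s.toJordanDecomposition.negPart μ hr hr_top] with x hp hn
  simp [rnDeriv_def, hp, hn, ENNReal.toReal_mul, mul_sub]

end SignedMeasure

end MeasureTheory

open SignedMeasure in
/-- attainment half of the η-trick for the squared TV-norm.
For a nonzero finite signed measure `ν`, the probability measure `η* = ‖ν‖_TV⁻¹ • |ν|`
satisfies `|ν| ≪ η*` and `∫ (dν/dη*)² dη* = ‖ν‖_TV²`. -/
theorem stmt_5 {W : Type*} [MeasurableSpace W]
    (ν : SignedMeasure W) (hν : ν ≠ 0)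
    (ηstar : Measure W)
    (hη : ηstar = (ν.totalVariation Set.univ)⁻¹ • ν.totalVariation) :
    IsProbabilityMeasure ηstar ∧
    ν.totalVariation ≪ ηstar ∧
    ∫ w, (ν.rnDeriv ηstar w) ^ 2 ∂ηstar = ((ν.totalVariation Set.univ).toReal) ^ 2 := by
  subst hη
  set μ := ν.totalVariation
  have : NeZero μ := ⟨totalVariation_eq_zero_iff.not.mpr hν⟩
  have hc : (μ Set.univ)⁻¹ ≠ 0 := ENNReal.inv_ne_zero.2 (measure_ne_top _ _)
  refine ⟨inferInstance, Measure.absolutelyContinuous_smul hc, ?_⟩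
  have hsq : ∀ᵐ x ∂(μ Set.univ)⁻¹ • μ,
      ν.rnDeriv ((μ Set.univ)⁻¹ • μ) x ^ 2 = (μ Set.univ).toReal ^ 2 := by
    refine Measure.smul_absolutelyContinuous.ae_le ?_
    filter_upwards [rnDeriv_smul_right_of_ne_top ν μ hc (ENNReal.inv_ne_top.2 (NeZero.ne _)),
      abs_rnDeriv_totalVariation_s5 ν] with x hx habs
    rw [hx, Pi.smul_apply, smul_eq_mul, mul_pow, ← sq_abs (ν.rnDeriv μ x), habs, inv_inv]
    simp
  rw [integral_congr_ae hsq, integral_const]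
  simp
end

section
/- Let W be a measurable space and t ∈ [0,1]. Let ν₀, ν₁ be finite signed measures and η₀, η₁ finite (nonnegative) measures on W such that |νᵢ| is absolutely continuous with respect to ηᵢ and fᵢ = dνᵢ/dηᵢ satisfies ∫ fᵢ² dηᵢ < ∞ for i = 0,1. Set ν_t = (1−t)ν₀ + tν₁ and η_t = (1−t)η₀ + tη₁. Then |ν_t| is absolutely continuous with respect to η_t and ∫ (dν_t/dη_t)² dη_t ≤ (1−t)·∫ f₀² dη₀ + t·∫ f₁² dη₁. -/
/-!
Let `μ = μ₀ + μ₁` and `gᵢ = dμᵢ/dμ`, so that `g₀ + g₁ = 1` `μ`-a.e. If `νᵢ = fᵢ μᵢ`, then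
`ν₀ + ν₁` has density `h = g₀ f₀ + g₁ f₁` with respect to `μ`, a pointwise convex combination of
`f₀` and `f₁`, so convexity of `x ↦ x²` gives `h² ≤ g₀ f₀² + g₁ f₁²`; integrating against `μ`
turns the right side into `∫ f₀² dμ₀ + ∫ f₁² dμ₁`. Scaling `(νᵢ, ηᵢ)` by the weights `1 - t`
and `t` reduces the convex combination in the theorem to this sum.
-/

open MeasureTheory Measure
open scoped ENNReal

namespace MeasureTheory

variable {W : Type*} [MeasurableSpace W]

theorem SignedMeasure.absolutelyContinuous_toENNRealVectorMeasure_iff (s : SignedMeasure W)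
    (μ : Measure W) : s ≪ᵥ μ.toENNRealVectorMeasure ↔ s.totalVariation ≪ μ := by
  rw [SignedMeasure.absolutelyContinuous_ennreal_iff,
    VectorMeasure.ennrealToMeasure_toENNRealVectorMeasure]

theorem withDensityᵥ_smul_measure {E : Type*} [NormedAddCommGroup E] [NormedSpace ℝ E]
    [CompleteSpace E] {μ : Measure W} {f : W → E} (hf : Integrable f μ) {c : ℝ≥0∞}
    (hc : c ≠ ∞) : (c • μ).withDensityᵥ f = c.toReal • μ.withDensityᵥ f := by
  ext1 s hs
  rw [_root_.smul_apply, withDensityᵥ_apply (hf.smul_measure hc) hs,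
    withDensityᵥ_apply hf hs, restrict_smul, integral_smul_measure]

theorem Measure.toReal_rnDeriv_add_toReal_rnDeriv_eq_one (μ ν : Measure W) [SigmaFinite μ]
    [SigmaFinite ν] :
    ∀ᵐ x ∂(μ + ν), (μ.rnDeriv (μ + ν) x).toReal + (ν.rnDeriv (μ + ν) x).toReal = 1 := by
  filter_upwards [μ.rnDeriv_add' ν (μ + ν), (μ + ν).rnDeriv_self, μ.rnDeriv_lt_top (μ + ν),
    ν.rnDeriv_lt_top (μ + ν)] with x hadd hself hμ hν
  rw [← ENNReal.toReal_add hμ.ne hν.ne, ← Pi.add_apply, ← hadd, hself, ENNReal.toReal_one]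

theorem withDensityᵥ_add_withDensityᵥ {E : Type*} [NormedAddCommGroup E] [NormedSpace ℝ E]
    [CompleteSpace E] {μ ν : Measure W} [SigmaFinite μ] [SigmaFinite ν] {f g : W → E}
    (hf : Integrable f μ) (hg : Integrable g ν) :
    μ.withDensityᵥ f + ν.withDensityᵥ g = (μ + ν).withDensityᵥ
      (fun x ↦ (μ.rnDeriv (μ + ν) x).toReal • f x + (ν.rnDeriv (μ + ν) x).toReal • g x) := by
  have hμ : μ ≪ μ + ν := AbsolutelyContinuous.rfl.add_right ν
  have hν : ν ≪ μ + ν := AbsolutelyContinuous.rfl.add_right' μ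
  rw [withDensityᵥ_add' ((integrable_rnDeriv_smul_iff hμ).2 hf)
    ((integrable_rnDeriv_smul_iff hν).2 hg), withDensityᵥ_rnDeriv_smul hμ hf,
    withDensityᵥ_rnDeriv_smul hν hg]

namespace SignedMeasure

variable {μ₀ μ₁ : Measure W} [SigmaFinite μ₀] [SigmaFinite μ₁] {f₀ f₁ : W → ℝ}

theorem totalVariation_withDensityᵥ_add_absolutelyContinuous (hf₀ : Integrable f₀ μ₀)
    (hf₁ : Integrable f₁ μ₁) :
    totalVariation (μ₀.withDensityᵥ f₀ + μ₁.withDensityᵥ f₁) ≪ μ₀ + μ₁ := by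
  rw [← absolutelyContinuous_toENNRealVectorMeasure_iff, withDensityᵥ_add_withDensityᵥ hf₀ hf₁]
  exact withDensityᵥ_absolutelyContinuous _ _

theorem integral_rnDeriv_withDensityᵥ_add_sq_le (hf₀ : Integrable f₀ μ₀)
    (hf₁ : Integrable f₁ μ₁) (hf₀' : Integrable (fun x ↦ f₀ x ^ 2) μ₀)
    (hf₁' : Integrable (fun x ↦ f₁ x ^ 2) μ₁) :
    ∫ x, rnDeriv (μ₀.withDensityᵥ f₀ + μ₁.withDensityᵥ f₁) (μ₀ + μ₁) x ^ 2 ∂(μ₀ + μ₁)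
      ≤ ∫ x, f₀ x ^ 2 ∂μ₀ + ∫ x, f₁ x ^ 2 ∂μ₁ := by
  have hμ₀ : μ₀ ≪ μ₀ + μ₁ := AbsolutelyContinuous.rfl.add_right μ₁
  have hμ₁ : μ₁ ≪ μ₀ + μ₁ := AbsolutelyContinuous.rfl.add_right' μ₀
  set g₀ : W → ℝ := fun x ↦ (μ₀.rnDeriv (μ₀ + μ₁) x).toReal
  set g₁ : W → ℝ := fun x ↦ (μ₁.rnDeriv (μ₀ + μ₁) x).toReal
  have hh : Integrable (fun x ↦ g₀ x • f₀ x + g₁ x • f₁ x) (μ₀ + μ₁) :=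
    ((integrable_rnDeriv_smul_iff hμ₀).2 hf₀).add ((integrable_rnDeriv_smul_iff hμ₁).2 hf₁)
  have hrnDeriv : (fun x ↦ g₀ x • f₀ x + g₁ x • f₁ x)
      =ᵐ[μ₀ + μ₁] rnDeriv (μ₀.withDensityᵥ f₀ + μ₁.withDensityᵥ f₁) (μ₀ + μ₁) :=
    eq_rnDeriv 0 _ hh VectorMeasure.MutuallySingular.zero_left
      (by rw [zero_add, withDensityᵥ_add_withDensityᵥ hf₀ hf₁])
  have hconvex : ∀ᵐ x ∂(μ₀ + μ₁),
      (g₀ x • f₀ x + g₁ x • f₁ x) ^ 2 ≤ g₀ x • f₀ x ^ 2 + g₁ x • f₁ x ^ 2 := by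
    filter_upwards [toReal_rnDeriv_add_toReal_rnDeriv_eq_one μ₀ μ₁] with x hx
    exact even_two.convexOn_pow.2 trivial trivial ENNReal.toReal_nonneg ENNReal.toReal_nonneg hx
  have hi₀ := (integrable_rnDeriv_smul_iff hμ₀).2 hf₀'
  have hi₁ := (integrable_rnDeriv_smul_iff hμ₁).2 hf₁'
  calc ∫ x, rnDeriv (μ₀.withDensityᵥ f₀ + μ₁.withDensityᵥ f₁) (μ₀ + μ₁) x ^ 2 ∂(μ₀ + μ₁)
      = ∫ x, (g₀ x • f₀ x + g₁ x • f₁ x) ^ 2 ∂(μ₀ + μ₁) :=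
        integral_congr_ae (hrnDeriv.symm.fun_comp (· ^ 2))
    _ ≤ ∫ x, g₀ x • f₀ x ^ 2 + g₁ x • f₁ x ^ 2 ∂(μ₀ + μ₁) :=
        integral_mono_of_nonneg (.of_forall fun _ ↦ sq_nonneg _) (hi₀.add hi₁) hconvex
    _ = ∫ x, f₀ x ^ 2 ∂μ₀ + ∫ x, f₁ x ^ 2 ∂μ₁ := by
        rw [integral_add hi₀ hi₁, integral_rnDeriv_smul hμ₀, integral_rnDeriv_smul hμ₁]

end SignedMeasure

theorem SignedMeasure.smul_eq_withDensityᵥ_rnDeriv {ν : SignedMeasure W} {η : Measure W}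
    [SigmaFinite η] (hν : ν.totalVariation ≪ η) {c : ℝ} (hc : 0 ≤ c) :
    c • ν = (ENNReal.ofReal c • η).withDensityᵥ (ν.rnDeriv η) := by
  rw [withDensityᵥ_smul_measure (integrable_rnDeriv ν η) ENNReal.ofReal_ne_top,
    ENNReal.toReal_ofReal hc,
    withDensityᵥ_rnDeriv_eq ν η ((absolutelyContinuous_toENNRealVectorMeasure_iff ν η).2 hν)]

end MeasureTheory

/-- joint convexity of `(ν, η) ↦ ∫ (dν/dη)² dη`.
For `t ∈ [0,1]`, `ν_t = (1−t)ν₀ + tν₁` and `η_t = (1−t)η₀ + tη₁`, if `|νᵢ| ≪ ηᵢ` with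
square-integrable densities `fᵢ = dνᵢ/dηᵢ`, then `|ν_t| ≪ η_t` and
`∫ (dν_t/dη_t)² dη_t ≤ (1−t)∫ f₀² dη₀ + t ∫ f₁² dη₁`. -/
theorem stmt_6 {W : Type*} [MeasurableSpace W]
    (t : ℝ) (ht : t ∈ Set.Icc (0 : ℝ) 1)
    (ν₀ ν₁ : SignedMeasure W) (η₀ η₁ : Measure W)
    [IsFiniteMeasure η₀] [IsFiniteMeasure η₁]
    (hac₀ : ν₀.totalVariation ≪ η₀) (hac₁ : ν₁.totalVariation ≪ η₁)
    (f₀ f₁ : W → ℝ) (hf₀ : f₀ = ν₀.rnDeriv η₀) (hf₁ : f₁ = ν₁.rnDeriv η₁)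
    (hi₀ : Integrable (fun w => f₀ w ^ 2) η₀) (hi₁ : Integrable (fun w => f₁ w ^ 2) η₁)
    (νt : SignedMeasure W) (hνt : νt = (1 - t) • ν₀ + t • ν₁)
    (ηt : Measure W) (hηt : ηt = ENNReal.ofReal (1 - t) • η₀ + ENNReal.ofReal t • η₁) :
    νt.totalVariation ≪ ηt ∧
    ∫ w, (νt.rnDeriv ηt w) ^ 2 ∂ηt
      ≤ (1 - t) * ∫ w, f₀ w ^ 2 ∂η₀ + t * ∫ w, f₁ w ^ 2 ∂η₁ := by
  obtain ⟨ht₀, ht₁⟩ := ht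
  have hs : 0 ≤ 1 - t := sub_nonneg.2 ht₁
  have := η₀.smul_finite (c := ENNReal.ofReal (1 - t)) ENNReal.ofReal_ne_top
  have := η₁.smul_finite (c := ENNReal.ofReal t) ENNReal.ofReal_ne_top
  subst hf₀ hf₁ hνt hηt
  rw [SignedMeasure.smul_eq_withDensityᵥ_rnDeriv hac₀ hs,
    SignedMeasure.smul_eq_withDensityᵥ_rnDeriv hac₁ ht₀]
  have hint₀ := (SignedMeasure.integrable_rnDeriv ν₀ η₀).smul_measure
    (ENNReal.ofReal_ne_top (r := 1 - t))
  have hint₁ := (SignedMeasure.integrable_rnDeriv ν₁ η₁).smul_measure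
    (ENNReal.ofReal_ne_top (r := t))
  refine ⟨SignedMeasure.totalVariation_withDensityᵥ_add_absolutelyContinuous hint₀ hint₁, ?_⟩
  refine (SignedMeasure.integral_rnDeriv_withDensityᵥ_add_sq_le hint₀ hint₁
    (hi₀.smul_measure ENNReal.ofReal_ne_top) (hi₁.smul_measure ENNReal.ofReal_ne_top)).trans_eq ?_
  rw [integral_smul_measure, integral_smul_measure, ENNReal.toReal_ofReal hs,
    ENNReal.toReal_ofReal ht₀, smul_eq_mul, smul_eq_mul]
end

section
/- Let W be a measurable space, λ > 0, and G : M(W) → ℝ a function on the space of finite signed measures on W such that G_λ(ν) := G(ν) + (λ/2)·‖ν‖_TV² is bounded below. For a Borel probability measure η on W define J_λ(η) = inf { G(ν) + (λ/2) ∫ (dν/dη)² dη : ν ∈ M(W), |ν| ≪ η, ∫ (dν/dη)² dη < ∞ }. Then inf_{η ∈ P(W)} J_λ(η) = inf_{ν ∈ M(W)} G_λ(ν). -/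
/-! If `|ν| ≪ η` with `η` a probability measure, then `‖ν‖_TV ≤ ∫ |dν/dη| dη` and Jensen's
inequality gives `‖ν‖_TV² ≤ ∫ (dν/dη)² dη`, so every value entering `J_λ(η)` dominates a value
of `G_λ`. Conversely, for `η = |ν| / ‖ν‖_TV` (any probability measure when `ν = 0`) the density
satisfies `|dν/dη| ≤ ‖ν‖_TV`, whence `J_λ(η) ≤ G_λ(ν)`. -/

open MeasureTheory

/-- The total variation norm of a finite signed measure. -/
noncomputable def tvNorm {W : Type*} [MeasurableSpace W] (ν : SignedMeasure W) : ℝ :=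
  (ν.totalVariation Set.univ).toReal

/-- The bilevel objective
`J_λ(η) = inf { G(ν) + (λ/2) ∫ (dν/dη)² dη : ν ∈ M(W), |ν| ≪ η, ∫ (dν/dη)² dη < ∞ }`. -/
noncomputable def Jlam {W : Type*} [MeasurableSpace W]
    (lam : ℝ) (G : SignedMeasure W → ℝ) (η : Measure W) : ℝ :=
  sInf { z : ℝ | ∃ ν : SignedMeasure W,
    ν.totalVariation ≪ η ∧ Integrable (fun w => ν.rnDeriv η w ^ 2) η ∧
    z = G ν + lam / 2 * ∫ w, ν.rnDeriv η w ^ 2 ∂η }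

namespace MeasureTheory

variable {W : Type*} [MeasurableSpace W]

lemma sq_integral_le_integral_sq {η : Measure W} [IsProbabilityMeasure η] {g : W → ℝ}
    (hg : Integrable g η) (hg2 : Integrable (fun w => g w ^ 2) η) :
    (∫ w, g w ∂η) ^ 2 ≤ ∫ w, g w ^ 2 ∂η :=
  (even_two.convexOn_pow (𝕜 := ℝ)).map_integral_le (continuous_pow 2).continuousOn isClosed_univ
    (by simp) hg hg2

namespace Measure

lemma exists_isProbabilityMeasure_absolutelyContinuous_rnDeriv_le [Nonempty W]
    (μ : Measure W) [IsFiniteMeasure μ] :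
    ∃ η : Measure W, IsProbabilityMeasure η ∧ μ ≪ η ∧ ∀ᵐ w ∂η, μ.rnDeriv η w ≤ μ Set.univ := by
  rcases eq_zero_or_neZero μ with rfl | hμ
  · refine ⟨dirac (Classical.arbitrary W), inferInstance, AbsolutelyContinuous.zero _, ?_⟩
    filter_upwards [rnDeriv_zero _] with w hw
    simp [hw]
  · have hc : (μ Set.univ)⁻¹ ≠ 0 := ENNReal.inv_ne_zero.2 (measure_ne_top _ _)
    refine ⟨(μ Set.univ)⁻¹ • μ, inferInstance, absolutelyContinuous_smul hc,
      smul_absolutelyContinuous.ae_le ?_⟩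
    filter_upwards [rnDeriv_smul_right_of_ne_top μ μ hc
      (ENNReal.inv_ne_top.2 (NeZero.ne _)), rnDeriv_self μ] with w hsmul hself
    simp [hsmul, hself]

end Measure

namespace SignedMeasure

lemma totalVariation_withDensityᵥ_le {η : Measure W} {f : W → ℝ} (hf : Integrable f η) :
    totalVariation (η.withDensityᵥ f) ≤ η.withDensity fun w => ‖f w‖ₑ := by
  rw [totalVariation_eq_variation]
  refine VectorMeasure.variation_le_of_forall_enorm_le fun E hE => ?_
  rw [withDensityᵥ_apply hf hE, withDensity_apply _ hE]
  exact enorm_integral_le_lintegral_enorm _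

lemma tvNorm_le_integral_abs_rnDeriv (ν : SignedMeasure W) (η : Measure W) [SigmaFinite η]
    (hac : ν.totalVariation ≪ η) : tvNorm ν ≤ ∫ w, |ν.rnDeriv η w| ∂η := by
  have hν : ν ≪ᵥ η.toENNRealVectorMeasure := by
    rwa [absolutelyContinuous_ennreal_iff, VectorMeasure.ennrealToMeasure_toENNRealVectorMeasure]
  have hf := integrable_rnDeriv ν η
  have hle := totalVariation_withDensityᵥ_le hf
  rw [withDensityᵥ_rnDeriv_eq ν η hν] at hle
  simp_rw [← Real.norm_eq_abs]
  rw [integral_norm_eq_lintegral_enorm hf.aestronglyMeasurable]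
  refine ENNReal.toReal_mono hf.hasFiniteIntegral.ne ?_
  simpa using Measure.le_iff'.1 hle Set.univ

lemma sq_tvNorm_le_integral_rnDeriv_sq (ν : SignedMeasure W) (η : Measure W)
    [IsProbabilityMeasure η] (hac : ν.totalVariation ≪ η)
    (hint : Integrable (fun w => ν.rnDeriv η w ^ 2) η) :
    tvNorm ν ^ 2 ≤ ∫ w, ν.rnDeriv η w ^ 2 ∂η := by
  have hf := integrable_rnDeriv ν η
  calc tvNorm ν ^ 2 ≤ (∫ w, |ν.rnDeriv η w| ∂η) ^ 2 := by
        gcongr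
        · exact ENNReal.toReal_nonneg
        · exact tvNorm_le_integral_abs_rnDeriv ν η hac
    _ ≤ ∫ w, |ν.rnDeriv η w| ^ 2 ∂η := sq_integral_le_integral_sq hf.abs (by simpa only [sq_abs])
    _ = ∫ w, ν.rnDeriv η w ^ 2 ∂η := by simp only [sq_abs]

lemma ae_abs_rnDeriv_le (ν : SignedMeasure W) (η : Measure W) [SigmaFinite η] :
    ∀ᵐ w ∂η, |ν.rnDeriv η w| ≤ (ν.totalVariation.rnDeriv η w).toReal := by
  filter_upwards [Measure.rnDeriv_add ν.toJordanDecomposition.posPart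
    ν.toJordanDecomposition.negPart η, Measure.rnDeriv_lt_top ν.toJordanDecomposition.posPart η,
    Measure.rnDeriv_lt_top ν.toJordanDecomposition.negPart η] with w hadd hpos hneg
  rw [totalVariation, hadd, Pi.add_apply, ENNReal.toReal_add hpos.ne hneg.ne, rnDeriv_def]
  exact abs_sub_le_of_nonneg_of_le ENNReal.toReal_nonneg
    (le_add_of_nonneg_right ENNReal.toReal_nonneg) ENNReal.toReal_nonneg
    (le_add_of_nonneg_left ENNReal.toReal_nonneg)

lemma rnDeriv_zero (η : Measure W) [SigmaFinite η] :
    (0 : SignedMeasure W).rnDeriv η =ᵐ[η] 0 := by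
  filter_upwards [ae_abs_rnDeriv_le 0 η, Measure.rnDeriv_zero η] with w hle hzero
  rw [totalVariation_zero, hzero] at hle
  simpa using hle

lemma exists_isProbabilityMeasure_integral_rnDeriv_sq_le [Nonempty W] (ν : SignedMeasure W) :
    ∃ η : Measure W, IsProbabilityMeasure η ∧ ν.totalVariation ≪ η ∧
      Integrable (fun w => ν.rnDeriv η w ^ 2) η ∧ ∫ w, ν.rnDeriv η w ^ 2 ∂η ≤ tvNorm ν ^ 2 := by
  obtain ⟨η, hη, hac, hle⟩ :=
    ν.totalVariation.exists_isProbabilityMeasure_absolutelyContinuous_rnDeriv_le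
  have hbound : ∀ᵐ w ∂η, ν.rnDeriv η w ^ 2 ≤ tvNorm ν ^ 2 := by
    filter_upwards [ae_abs_rnDeriv_le ν η, hle] with w habs hdens
    rw [← sq_abs]
    gcongr
    exact habs.trans (ENNReal.toReal_mono (measure_ne_top _ _) hdens)
  have hint : Integrable (fun w => ν.rnDeriv η w ^ 2) η := by
    refine (integrable_const (tvNorm ν ^ 2)).mono'
      ((measurable_rnDeriv ν η).pow_const 2).aestronglyMeasurable ?_
    filter_upwards [hbound] with w hw
    rwa [Real.norm_of_nonneg (sq_nonneg _)]
  refine ⟨η, hη, hac, hint, ?_⟩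
  calc ∫ w, ν.rnDeriv η w ^ 2 ∂η ≤ ∫ _, tvNorm ν ^ 2 ∂η :=
        integral_mono_ae hint (integrable_const _) hbound
    _ = tvNorm ν ^ 2 := by simp

end SignedMeasure

end MeasureTheory

open SignedMeasure

section Jlam

variable {W : Type*} [MeasurableSpace W] {lam m : ℝ} {G : SignedMeasure W → ℝ}

lemma le_add_integral_rnDeriv_sq (hlam : 0 ≤ lam)
    (hm : ∀ ν : SignedMeasure W, m ≤ G ν + lam / 2 * tvNorm ν ^ 2) {η : Measure W}
    [IsProbabilityMeasure η] {ν : SignedMeasure W} (hac : ν.totalVariation ≪ η)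
    (hint : Integrable (fun w => ν.rnDeriv η w ^ 2) η) :
    m ≤ G ν + lam / 2 * ∫ w, ν.rnDeriv η w ^ 2 ∂η := by
  grw [hm ν, sq_tvNorm_le_integral_rnDeriv_sq ν η hac hint]

lemma le_Jlam (hlam : 0 ≤ lam) (hm : ∀ ν : SignedMeasure W, m ≤ G ν + lam / 2 * tvNorm ν ^ 2)
    (η : Measure W) [IsProbabilityMeasure η] : m ≤ Jlam lam G η := by
  have hzero : Integrable (fun w => (0 : SignedMeasure W).rnDeriv η w ^ 2) η :=
    (integrable_zero _ _ _).congr (by filter_upwards [rnDeriv_zero η] with w hw; simp [hw])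
  refine le_csInf ⟨_, 0, by simp [totalVariation_zero], hzero, rfl⟩ ?_
  rintro _ ⟨ν, hac, hint, rfl⟩
  exact le_add_integral_rnDeriv_sq hlam hm hac hint

lemma Jlam_le (hlam : 0 ≤ lam) (hm : ∀ ν : SignedMeasure W, m ≤ G ν + lam / 2 * tvNorm ν ^ 2)
    {η : Measure W} [IsProbabilityMeasure η] {ν : SignedMeasure W} (hac : ν.totalVariation ≪ η)
    (hint : Integrable (fun w => ν.rnDeriv η w ^ 2) η) :
    Jlam lam G η ≤ G ν + lam / 2 * ∫ w, ν.rnDeriv η w ^ 2 ∂η :=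
  csInf_le ⟨m, by rintro _ ⟨ν, hac, hint, rfl⟩; exact le_add_integral_rnDeriv_sq hlam hm hac hint⟩
    ⟨ν, hac, hint, rfl⟩

end Jlam

/-- value-equality part of Proposition 3.3.
If `G_λ(ν) = G(ν) + (λ/2)‖ν‖_TV²` is bounded below, then
`inf_{η ∈ P(W)} J_λ(η) = inf_{ν ∈ M(W)} G_λ(ν)`. -/
theorem stmt_7 {W : Type*} [MeasurableSpace W] [Nonempty W]
    (lam : ℝ) (hlam : 0 < lam) (G : SignedMeasure W → ℝ)
    (c : ℝ)
    (hbdd : ∀ ν : SignedMeasure W, c ≤ G ν + lam / 2 * tvNorm ν ^ 2) :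
    sInf { y : ℝ | ∃ η : Measure W, IsProbabilityMeasure η ∧ y = Jlam lam G η }
      = sInf { y : ℝ | ∃ ν : SignedMeasure W, y = G ν + lam / 2 * tvNorm ν ^ 2 } := by
  set A := { y : ℝ | ∃ η : Measure W, IsProbabilityMeasure η ∧ y = Jlam lam G η }
  set B := { y : ℝ | ∃ ν : SignedMeasure W, y = G ν + lam / 2 * tvNorm ν ^ 2 }
  have hA : BddBelow A := ⟨c, by rintro _ ⟨η, hη, rfl⟩; exact le_Jlam hlam.le hbdd η⟩
  have hB : BddBelow B := ⟨c, by rintro _ ⟨ν, rfl⟩; exact hbdd ν⟩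
  apply le_antisymm
  · refine le_csInf ⟨_, 0, rfl⟩ ?_
    rintro _ ⟨ν, rfl⟩
    obtain ⟨η, hη, hac, hint, hle⟩ := exists_isProbabilityMeasure_integral_rnDeriv_sq_le ν
    calc sInf A ≤ Jlam lam G η := csInf_le hA ⟨η, hη, rfl⟩
      _ ≤ G ν + lam / 2 * ∫ w, ν.rnDeriv η w ^ 2 ∂η := Jlam_le hlam.le hbdd hac hint
      _ ≤ G ν + lam / 2 * tvNorm ν ^ 2 := by gcongr
  · refine le_csInf ⟨_, Measure.dirac (Classical.arbitrary W), inferInstance, rfl⟩ ?_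
    rintro _ ⟨η, hη, rfl⟩
    exact le_Jlam hlam.le (fun ν => csInf_le hB ⟨ν, rfl⟩) η
end

section
/- Let W be a measurable space and let G : M(W) → ℝ be convex on the real vector space M(W) of finite signed measures on W. Let λ > 0 and suppose ν ∈ M(W) minimizes ν' ↦ G(ν') + (λ/2)·‖ν'‖_TV² over M(W). Then ν also minimizes ν' ↦ G(ν') + λ·‖ν‖_TV·‖ν'‖_TV over M(W). -/
/-!
Move from `ν` towards `ν'` along the segment `νₜ = (1 - t) • ν + t • ν'`. Convexity of `G` and of
the total variation norm bound the squared-norm objective at `νₜ` by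
`(1 - t) G ν + t G ν' + (λ/2) ((1 - t) ‖ν‖ + t ‖ν'‖)²`, and minimality of `ν` makes this at least
its value at `t = 0`. Dividing by `t` and letting `t → 0⁺` leaves the first-order condition, in
which `(λ/2) x²` has been linearised at `x = ‖ν‖` to slope `λ ‖ν‖`.
-/

open MeasureTheory

open Set Filter Topology

namespace MeasureTheory.SignedMeasure

variable {W : Type*} [MeasurableSpace W]

theorem totalVariation_add_le (s t : SignedMeasure W) :
    (s + t).totalVariation ≤ s.totalVariation + t.totalVariation := by
  simpa only [totalVariation_eq_variation] using VectorMeasure.variation_add_le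

theorem totalVariation_smul (r : ℝ) (s : SignedMeasure W) :
    (r • s).totalVariation = ‖r‖₊ • s.totalVariation := by
  simpa only [totalVariation_eq_variation] using VectorMeasure.variation_smul

end MeasureTheory.SignedMeasure

open SignedMeasure in
noncomputable def tvSeminorm (W : Type*) [MeasurableSpace W] : Seminorm ℝ (SignedMeasure W) :=
  Seminorm.of tvNorm
    (fun s t => by
      rw [tvNorm, tvNorm, tvNorm, ← ENNReal.toReal_add (measure_ne_top _ _) (measure_ne_top _ _)]
      exact ENNReal.toReal_mono (by finiteness) (totalVariation_add_le s t univ))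
    (fun r s => by
      rw [tvNorm, tvNorm, totalVariation_smul, Measure.smul_apply, ENNReal.toReal_smul]
      rfl)

theorem coe_tvSeminorm (W : Type*) [MeasurableSpace W] : ⇑(tvSeminorm W) = tvNorm := rfl

theorem ConvexOn.isMinOn_add_mul_of_isMinOn_add_sq {E : Type*} [AddCommMonoid E] [Module ℝ E]
    {s : Set E} {G N : E → ℝ} (hG : ConvexOn ℝ s G) (hN : ConvexOn ℝ s N)
    (hN0 : ∀ y ∈ s, 0 ≤ N y) {c : ℝ} (hc : 0 ≤ c) {x : E} (hxs : x ∈ s)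
    (hx : IsMinOn (fun y => G y + c / 2 * N y ^ 2) s x) :
    IsMinOn (fun y => G y + c * N x * N y) s x := by
  intro y hys
  set a := N x
  set b := N y
  have hstep : ∀ t ∈ Ioo (0 : ℝ) 1, G x - G y ≤ c * a * (b - a) + t * (c / 2 * (b - a) ^ 2) := by
    rintro t ⟨ht0, ht1⟩
    have hxt : (1 - t) • x + t • y ∈ s := hG.1 hxs hys (by linarith) ht0.le (by ring)
    have hGt : G ((1 - t) • x + t • y) ≤ (1 - t) * G x + t * G y :=
      hG.2 hxs hys (by linarith) ht0.le (by ring)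
    have hNt : N ((1 - t) • x + t • y) ≤ (1 - t) * a + t * b :=
      hN.2 hxs hys (by linarith) ht0.le (by ring)
    have hNt_sq := mul_le_mul_of_nonneg_left (pow_le_pow_left₀ (hN0 _ hxt) hNt 2) hc
    have hmin : G x + c / 2 * a ^ 2 ≤ G _ + c / 2 * N _ ^ 2 := hx hxt
    have hscaled : t * (G x - G y) ≤ t * (c * a * (b - a) + t * (c / 2 * (b - a) ^ 2)) := by
      nlinarith
    exact le_of_mul_le_mul_left hscaled ht0
  have hlim : Tendsto (fun t : ℝ => c * a * (b - a) + t * (c / 2 * (b - a) ^ 2)) (𝓝[>] 0)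
      (𝓝 (c * a * (b - a))) := by
    have : Continuous (fun t : ℝ => c * a * (b - a) + t * (c / 2 * (b - a) ^ 2)) := by fun_prop
    simpa using this.continuousWithinAt.tendsto (x := 0) (s := Ioi 0)
  have hfirst_order := ge_of_tendsto hlim (eventually_of_mem (Ioo_mem_nhdsGT one_pos) hstep)
  show G x + c * a * a ≤ G y + c * a * b
  linarith

/-- Appendix A.1, first direction of the regularization-path equivalence.
If `G` is convex on `M(W)` and `ν` minimizes `ν' ↦ G(ν') + (λ/2)‖ν'‖_TV²`, then `ν` also
minimizes `ν' ↦ G(ν') + λ‖ν‖_TV·‖ν'‖_TV`. -/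
theorem stmt_9 {W : Type*} [MeasurableSpace W]
    (G : SignedMeasure W → ℝ) (hG : ConvexOn ℝ Set.univ G)
    (lam : ℝ) (hlam : 0 < lam)
    (ν : SignedMeasure W)
    (hmin : ∀ ν' : SignedMeasure W,
      G ν + lam / 2 * tvNorm ν ^ 2 ≤ G ν' + lam / 2 * tvNorm ν' ^ 2) :
    ∀ ν' : SignedMeasure W,
      G ν + lam * tvNorm ν * tvNorm ν ≤ G ν' + lam * tvNorm ν * tvNorm ν' := by
  rw [← coe_tvSeminorm] at hmin ⊢
  exact isMinOn_univ_iff.1 <| hG.isMinOn_add_mul_of_isMinOn_add_sq (tvSeminorm W).convexOn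
    (fun _ _ => apply_nonneg _ _) hlam.le (mem_univ ν) (isMinOn_univ_iff.2 hmin)
end

section
/- Let W be a measurable space and let G : M(W) → ℝ be convex on the real vector space M(W) of finite signed measures on W. Let λ̃ > 0 and suppose ν ∈ M(W), ν ≠ 0, minimizes ν' ↦ G(ν') + λ̃·‖ν'‖_TV over M(W). Then ν also minimizes ν' ↦ G(ν') + ( λ̃ / (2·‖ν‖_TV) )·‖ν'‖_TV² over M(W). -/
open MeasureTheory

/-! The penalties `λ̃ t` and `λ̃ t² / (2a)` touch to first order at `t = a`: their difference
`λ̃ t - λ̃ t² / (2a)` falls short of its value at `a` by exactly `λ̃ (a - t)² / (2a) ≥ 0`. Hence passing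
from the first penalty to the second cannot make any competitor beat a minimizer `ν` with
`‖ν‖_TV = a`. -/

theorem mul_sub_div_mul_sq_le {lam a : ℝ} (hlam : 0 ≤ lam) (ha : 0 < a) (b : ℝ) :
    lam * b - lam / (2 * a) * b ^ 2 ≤ lam * a - lam / (2 * a) * a ^ 2 := by
  have hgap : lam * a - lam / (2 * a) * a ^ 2 - (lam * b - lam / (2 * a) * b ^ 2)
      = lam / (2 * a) * (a - b) ^ 2 := by
    field_simp
    ring
  have : 0 ≤ lam / (2 * a) * (a - b) ^ 2 := by positivity
  linarith

theorem isMinOn_add_div_mul_sq {X : Type*} {G R : X → ℝ} {lam : ℝ} {x : X}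
    (hlam : 0 ≤ lam) (hx : 0 < R x) (hmin : IsMinOn (fun y ↦ G y + lam * R y) Set.univ x) :
    IsMinOn (fun y ↦ G y + lam / (2 * R x) * R y ^ 2) Set.univ x :=
  isMinOn_univ_iff.mpr fun y ↦ by
    have := isMinOn_univ_iff.mp hmin y
    linarith [mul_sub_div_mul_sq_le hlam hx (R y)]

theorem tvNorm_pos {W : Type*} [MeasurableSpace W] {ν : SignedMeasure W} (hν : ν ≠ 0) :
    0 < tvNorm ν := by
  refine ENNReal.toReal_pos (fun h ↦ hν ?_) (measure_ne_top _ _)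
  ext s -
  exact ν.null_of_totalVariation_zero (measure_mono_null (Set.subset_univ s) h)

theorem stmt_10_general {W : Type*} [MeasurableSpace W]
    (G : SignedMeasure W → ℝ)
    (tlam : ℝ) (htlam : 0 < tlam)
    (ν : SignedMeasure W) (hν : ν ≠ 0)
    (hmin : ∀ ν' : SignedMeasure W,
      G ν + tlam * tvNorm ν ≤ G ν' + tlam * tvNorm ν') :
    ∀ ν' : SignedMeasure W,
      G ν + tlam / (2 * tvNorm ν) * tvNorm ν ^ 2
        ≤ G ν' + tlam / (2 * tvNorm ν) * tvNorm ν' ^ 2 :=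
  isMinOn_univ_iff.mp <|
    isMinOn_add_div_mul_sq htlam.le (tvNorm_pos hν) (isMinOn_univ_iff.mpr hmin)

/-- Appendix A.1, second direction of the regularization-path equivalence.
If `G` is convex on `M(W)` and `ν ≠ 0` minimizes `ν' ↦ G(ν') + λ̃‖ν'‖_TV`, then `ν` also
minimizes `ν' ↦ G(ν') + (λ̃/(2‖ν‖_TV))·‖ν'‖_TV²`. -/
theorem stmt_10 {W : Type*} [MeasurableSpace W]
    (G : SignedMeasure W → ℝ) (hG : ConvexOn ℝ Set.univ G)
    (tlam : ℝ) (htlam : 0 < tlam)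
    (ν : SignedMeasure W) (hν : ν ≠ 0)
    (hmin : ∀ ν' : SignedMeasure W,
      G ν + tlam * tvNorm ν ≤ G ν' + tlam * tvNorm ν') :
    ∀ ν' : SignedMeasure W,
      G ν + tlam / (2 * tvNorm ν) * tvNorm ν ^ 2
        ≤ G ν' + tlam / (2 * tvNorm ν) * tvNorm ν' ^ 2 :=
  stmt_10_general G tlam htlam ν hν hmin
end

section
/- Let W be a measurable space, η a Borel probability measure on W, λ > 0 and L₀ ≥ 0. Let k : W × W → ℝ be measurable, symmetric (k(w,w') = k(w',w)), with |k(w,w')| ≤ L₀ for all w, w', and positive semi-definite in the sense that ∫∫ k(w,w')·u(w)·u(w') dη(w) dη(w') ≥ 0 for every bounded measurable u : W → ℝ. Let V, h : W → ℝ be bounded measurable functions satisfying, for every w ∈ W: λ·h(w) + ∫ k(w,w')·h(w') dη(w') = V(w). Then sup_{w ∈ W} |h(w)| ≤ (1/λ)·(1 + L₀/λ)·sup_{w ∈ W} |V(w)|. -/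
/-!
Pairing the equation with `h` and using positive semi-definiteness of `k` gives the energy
estimate `λ ‖h‖₂² ≤ ∫ h V ≤ sup |V| · ‖h‖₁`. Since `‖h‖₁ ≤ ‖h‖₂` for a probability measure,
this yields `‖h‖₁ ≤ sup |V| / λ`. Finally, solving the equation for `h(w)` gives
`λ |h(w)| ≤ |V(w)| + L₀ ‖h‖₁`.
-/

open MeasureTheory

section

variable {W : Type*} [MeasurableSpace W] {μ : Measure W}

theorem sq_integral_abs_le_integral_sq [IsProbabilityMeasure μ] {f : W → ℝ} (hf : MemLp f 2 μ) :
    (∫ x, |f x| ∂μ) ^ 2 ≤ ∫ x, f x ^ 2 ∂μ := by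
  have hvar := ProbabilityTheory.variance_nonneg |f| μ
  rw [ProbabilityTheory.variance_eq_sub hf.abs] at hvar
  simpa [sq_abs] using hvar

theorem abs_integral_mul_le_mul_integral_abs {k h : W → ℝ} {L : ℝ} (hh : Integrable h μ)
    (hk : ∀ x, |k x| ≤ L) : |∫ x, k x * h x ∂μ| ≤ L * ∫ x, |h x| ∂μ := by
  have hle := norm_integral_le_of_norm_le (hh.abs.const_mul L) (ae_of_all _ fun x => by
    rw [Real.norm_eq_abs, abs_mul]
    exact mul_le_mul_of_nonneg_right (hk x) (abs_nonneg (h x)))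
  rwa [integral_const_mul] at hle

theorem le_div_of_mul_sq_le_mul {a b c : ℝ} (ha : 0 ≤ a) (hb : 0 ≤ b) (hc : 0 < c)
    (h : c * a ^ 2 ≤ b * a) : a ≤ b / c := by
  rw [le_div_iff₀ hc]
  rcases ha.eq_or_lt with rfl | ha
  · simpa using hb
  · nlinarith

end

section Resolvent

variable {W : Type*} [MeasurableSpace W] {η : Measure W} {lam : ℝ} {k : W × W → ℝ}
  {V h : W → ℝ}

theorem mul_integral_sq_le_integral_mul_of_resolvent
    (hpsd : 0 ≤ ∫ w, (∫ w', k (w, w') * h w * h w' ∂η) ∂η)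
    (heq : ∀ w, lam * h w + ∫ w', k (w, w') * h w' ∂η = V w)
    (hh : Integrable (fun w => h w ^ 2) η) (hhV : Integrable (fun w => h w * V w) η) :
    lam * ∫ w, h w ^ 2 ∂η ≤ ∫ w, h w * V w ∂η := by
  have hquad : ∀ w, ∫ w', k (w, w') * h w * h w' ∂η = h w * V w - lam * h w ^ 2 := by
    intro w
    rw [← heq w]
    simp only [mul_right_comm _ (h w), integral_mul_const]
    ring
  rw [integral_congr_ae (ae_of_all _ hquad), integral_sub hhV (hh.const_mul lam),
    integral_const_mul] at hpsd
  linarith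

theorem integral_abs_le_div_of_resolvent [IsProbabilityMeasure η] (hlam : 0 < lam)
    (hpsd : 0 ≤ ∫ w, (∫ w', k (w, w') * h w * h w' ∂η) ∂η)
    (heq : ∀ w, lam * h w + ∫ w', k (w, w') * h w' ∂η = V w)
    (hh : MemLp h 2 η) (hV : AEStronglyMeasurable V η) {CV : ℝ} (hCV : ∀ w, |V w| ≤ CV) :
    ∫ w, |h w| ∂η ≤ CV / lam := by
  obtain ⟨w₀⟩ := nonempty_of_isProbabilityMeasure η
  have hh₁ : Integrable h η := hh.integrable one_le_two
  have hhV_le : ∫ w, h w * V w ∂η ≤ CV * ∫ w, |h w| ∂η :=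
    calc ∫ w, h w * V w ∂η = ∫ w, V w * h w ∂η := by simp_rw [mul_comm]
      _ ≤ |∫ w, V w * h w ∂η| := le_abs_self _
      _ ≤ CV * ∫ w, |h w| ∂η := abs_integral_mul_le_mul_integral_abs hh₁ hCV
  have henergy := mul_integral_sq_le_integral_mul_of_resolvent hpsd heq hh.integrable_sq
    (hh₁.mul_bdd hV (ae_of_all _ hCV))
  refine le_div_of_mul_sq_le_mul (integral_nonneg fun _ => abs_nonneg _)
    ((abs_nonneg _).trans (hCV w₀)) hlam ?_
  calc lam * (∫ w, |h w| ∂η) ^ 2 ≤ lam * ∫ w, h w ^ 2 ∂η :=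
        mul_le_mul_of_nonneg_left (sq_integral_abs_le_integral_sq hh) hlam.le
    _ ≤ CV * ∫ w, |h w| ∂η := henergy.trans hhV_le

end Resolvent

theorem stmt_12_general {W : Type*} [MeasurableSpace W]
    (η : Measure W) [IsProbabilityMeasure η]
    (lam L₀ : ℝ) (hlam : 0 < lam) (hL₀ : 0 ≤ L₀)
    (k : W × W → ℝ)
    (hbound : ∀ w w' : W, |k (w, w')| ≤ L₀)
    (hpsd : ∀ u : W → ℝ, Measurable u → (∃ C, ∀ w, |u w| ≤ C) →
      0 ≤ ∫ w, (∫ w', k (w, w') * u w * u w' ∂η) ∂η)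
    (V h : W → ℝ) (hV : Measurable V) (hh : Measurable h)
    (hhb : ∃ C, ∀ w, |h w| ≤ C)
    (heq : ∀ w : W, lam * h w + ∫ w', k (w, w') * h w' ∂η = V w)
    (CV : ℝ) (hCV : ∀ w : W, |V w| ≤ CV) :
    ∀ w : W, |h w| ≤ 1 / lam * (1 + L₀ / lam) * CV := by
  intro w
  obtain ⟨Ch, hCh⟩ := hhb
  have hh₂ : MemLp h 2 η :=
    (memLp_top_of_bound hh.aestronglyMeasurable Ch (ae_of_all _ hCh)).mono_exponent le_top
  have hL1 := integral_abs_le_div_of_resolvent hlam (hpsd h hh ⟨Ch, hCh⟩) heq hh₂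
    hV.aestronglyMeasurable hCV
  have hKh := abs_integral_mul_le_mul_integral_abs (hh₂.integrable one_le_two) (hbound w)
  have hsolve : lam * h w = V w - ∫ w', k (w, w') * h w' ∂η := by linarith [heq w]
  calc |h w| = |lam * h w| / lam := by rw [abs_mul, abs_of_pos hlam]; field_simp
    _ = |V w - ∫ w', k (w, w') * h w' ∂η| / lam := by rw [hsolve]
    _ ≤ (|V w| + |∫ w', k (w, w') * h w' ∂η|) / lam := by gcongr; exact abs_sub _ _
    _ ≤ (CV + L₀ * (CV / lam)) / lam := by gcongr; exacts [hCV w, hKh.trans (by gcongr)]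
    _ = 1 / lam * (1 + L₀ / lam) * CV := by ring

/-- quantitative content of Lemma D.4.
If `k` is a measurable symmetric kernel, bounded by `L₀` and positive semi-definite on
`L²(η)`, and bounded measurable `h`, `V` satisfy `λ h(w) + ∫ k(w,w') h(w') dη(w') = V(w)`,
then `sup |h| ≤ (1/λ)(1 + L₀/λ) sup |V|` (encoded via arbitrary upper bounds `CV` of `|V|`). -/
theorem stmt_12 {W : Type*} [MeasurableSpace W]
    (η : Measure W) [IsProbabilityMeasure η]
    (lam L₀ : ℝ) (hlam : 0 < lam) (hL₀ : 0 ≤ L₀)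
    (k : W × W → ℝ) (hk : Measurable k)
    (hsymm : ∀ w w' : W, k (w, w') = k (w', w))
    (hbound : ∀ w w' : W, |k (w, w')| ≤ L₀)
    (hpsd : ∀ u : W → ℝ, Measurable u → (∃ C, ∀ w, |u w| ≤ C) →
      0 ≤ ∫ w, (∫ w', k (w, w') * u w * u w' ∂η) ∂η)
    (V h : W → ℝ) (hV : Measurable V) (hh : Measurable h)
    (hVb : ∃ C, ∀ w, |V w| ≤ C) (hhb : ∃ C, ∀ w, |h w| ≤ C)
    (heq : ∀ w : W, lam * h w + ∫ w', k (w, w') * h w' ∂η = V w)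
    (CV : ℝ) (hCV : ∀ w : W, |V w| ≤ CV) :
    ∀ w : W, |h w| ≤ 1 / lam * (1 + L₀ / lam) * CV :=
  stmt_12_general η lam L₀ hlam hL₀ k hbound hpsd V h hV hh hhb heq CV hCV
end

section
/- Let H be a real Hilbert space, W a measurable space, η a Borel probability measure on W, λ > 0, B ≥ 0, and φ : W → H a strongly measurable map with ‖φ(w)‖ ≤ B for all w. Let y ∈ H, and suppose h₀ ∈ H satisfies λ·h₀ + ∫ ⟨φ(w), h₀⟩·φ(w) dη(w) = y (a Bochner integral). Then for every measurable f : W → ℝ with ∫ f(w)² dη(w) < ∞: (1/2)·‖ ∫ f(w)·φ(w) dη(w) − y ‖² + (λ/2)·∫ f(w)² dη(w) ≥ (λ/2)·⟨y, h₀⟩, and equality holds for f(w) = ⟨h₀, φ(w)⟩. -/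
/-!
With `A f = ∫ f φ dη` and its adjoint `A* h = ⟪h, φ ·⟫`, the hypothesis on `h₀` says that
`f₀ = A* h₀` has residual `A f₀ - y = -λ h₀`, whence `∫ f₀² = ⟪h₀, A f₀⟫ = ⟪y, h₀⟫ - λ ‖h₀‖²`
and the objective at `f₀` equals `(λ/2) ⟪y, h₀⟫`. For an arbitrary `f`, the two Young inequalities
`½ ‖A f - y‖² ≥ ⟪A f - y, -λ h₀⟫ - ½ ‖λ h₀‖²` and `f² ≥ 2 f f₀ - f₀²` produce the cross terms
`-λ ⟪h₀, A f⟫` and `λ ∫ f f₀`, which cancel because `⟪h₀, A f⟫ = ∫ f f₀`.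
-/

open MeasureTheory
open scoped RealInnerProductSpace

section RidgeRegression

variable {H : Type*} [NormedAddCommGroup H] [InnerProductSpace ℝ H]
  {W : Type*} [MeasurableSpace W] {η : Measure W} {φ : W → H} {lam : ℝ} {y h₀ : H}

/-- The inner objective of `J_λ(η)`, which is its infimum over `f ∈ L²(η)`. -/
noncomputable def ridgeObjective (η : Measure W) (φ : W → H) (lam : ℝ) (y : H) (f : W → ℝ) :
    ℝ :=
  1 / 2 * ‖(∫ w, f w • φ w ∂η) - y‖ ^ 2 + lam / 2 * ∫ w, f w ^ 2 ∂η

theorem real_inner_le_half_norm_sq_add (a b : H) :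
    ⟪a, b⟫ ≤ 1 / 2 * ‖a‖ ^ 2 + 1 / 2 * ‖b‖ ^ 2 := by
  linarith [norm_sub_sq_real a b, sq_nonneg ‖a - b‖]

theorem inner_integral_smul_eq_integral_mul_inner [CompleteSpace H] {f : W → ℝ}
    (hf : Integrable (fun w => f w • φ w) η) (h : H) :
    ⟪h, ∫ w, f w • φ w ∂η⟫ = ∫ w, f w * ⟪h, φ w⟫ ∂η := by
  rw [← integral_inner hf h]
  simp_rw [real_inner_smul_right]

theorem memLp_top_inner_of_norm_le {B : ℝ} (hφm : AEStronglyMeasurable φ η)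
    (hφb : ∀ w, ‖φ w‖ ≤ B) (h : H) : MemLp (fun w => ⟪h, φ w⟫) ⊤ η :=
  memLp_top_of_bound (aestronglyMeasurable_const.inner hφm) (‖h‖ * B) <| ae_of_all _ fun w =>
    (norm_inner_le_norm h (φ w)).trans (by gcongr; exact hφb w)

theorem integral_inner_smul_eq_sub (hfix : lam • h₀ + ∫ w, ⟪φ w, h₀⟫ • φ w ∂η = y) :
    ∫ w, ⟪h₀, φ w⟫ • φ w ∂η = y - lam • h₀ := by
  rw [← hfix, add_sub_cancel_left]
  simp_rw [real_inner_comm h₀]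

variable [CompleteSpace H] [IsFiniteMeasure η] {B : ℝ}

theorem integral_inner_sq_eq (hφm : AEStronglyMeasurable φ η) (hφb : ∀ w, ‖φ w‖ ≤ B)
    (hfix : lam • h₀ + ∫ w, ⟪φ w, h₀⟫ • φ w ∂η = y) :
    ∫ w, ⟪h₀, φ w⟫ ^ 2 ∂η = ⟪y, h₀⟫ - lam * ‖h₀‖ ^ 2 := by
  have hf₀ : Integrable (fun w => ⟪h₀, φ w⟫) η :=
    (memLp_top_inner_of_norm_le hφm hφb h₀).integrable le_top
  simp_rw [sq, ← inner_integral_smul_eq_integral_mul_inner (hf₀.smul_bdd B hφm (ae_of_all _ hφb)),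
    integral_inner_smul_eq_sub hfix, inner_sub_right, real_inner_smul_right,
    real_inner_self_eq_norm_sq, real_inner_comm h₀]
  ring

theorem ridgeObjective_inner_eq (hφm : AEStronglyMeasurable φ η) (hφb : ∀ w, ‖φ w‖ ≤ B)
    (hfix : lam • h₀ + ∫ w, ⟪φ w, h₀⟫ • φ w ∂η = y) :
    ridgeObjective η φ lam y (fun w => ⟪h₀, φ w⟫) = lam / 2 * ⟪y, h₀⟫ := by
  rw [ridgeObjective, integral_inner_smul_eq_sub hfix, sub_sub_cancel_left,
    integral_inner_sq_eq hφm hφb hfix, norm_neg, norm_smul, mul_pow, Real.norm_eq_abs, sq_abs]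
  ring

theorem le_ridgeObjective (hlam : 0 ≤ lam) (hφm : AEStronglyMeasurable φ η)
    (hφb : ∀ w, ‖φ w‖ ≤ B) (hfix : lam • h₀ + ∫ w, ⟪φ w, h₀⟫ • φ w ∂η = y) {f : W → ℝ}
    (hfm : AEStronglyMeasurable f η) (hf2 : Integrable (fun w => f w ^ 2) η) :
    lam / 2 * ⟪y, h₀⟫ ≤ ridgeObjective η φ lam y f := by
  have hf₀ := memLp_top_inner_of_norm_le hφm hφb h₀
  have hf : Integrable f η := ((memLp_two_iff_integrable_sq hfm).2 hf2).integrable one_le_two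
  have hff₀ : Integrable (fun w => 2 * (f w * ⟪h₀, φ w⟫)) η := (hf.mul_of_top_left hf₀).const_mul 2
  have hf₀sq : Integrable (fun w => ⟪h₀, φ w⟫ ^ 2) η := (hf₀.mono_exponent le_top).integrable_sq
  have hcross : ⟪(∫ w, f w • φ w ∂η) - y, -(lam • h₀)⟫
      = lam * ⟪y, h₀⟫ - lam * ∫ w, f w * ⟪h₀, φ w⟫ ∂η := by
    rw [inner_neg_right, inner_smul_right, inner_sub_left, real_inner_comm h₀ (∫ w, f w • φ w ∂η),
      inner_integral_smul_eq_integral_mul_inner (hf.smul_bdd B hφm (ae_of_all _ hφb))]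
    ring
  have hyoungH := real_inner_le_half_norm_sq_add ((∫ w, f w • φ w ∂η) - y) (-(lam • h₀))
  have hyoungL2 : ∫ w, (2 * (f w * ⟪h₀, φ w⟫) - ⟪h₀, φ w⟫ ^ 2) ∂η ≤ ∫ w, f w ^ 2 ∂η :=
    integral_mono (hff₀.sub hf₀sq) hf2 fun w => by linarith [two_mul_le_add_sq (f w) ⟪h₀, φ w⟫]
  rw [integral_sub hff₀ hf₀sq, integral_const_mul,
    integral_inner_sq_eq hφm hφb hfix] at hyoungL2
  rw [hcross, norm_neg, norm_smul, mul_pow, Real.norm_eq_abs, sq_abs] at hyoungH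
  unfold ridgeObjective
  linarith [mul_le_mul_of_nonneg_left hyoungL2 (by positivity : (0 : ℝ) ≤ lam / 2)]

end RidgeRegression

theorem stmt_13_general {H : Type*} [NormedAddCommGroup H] [InnerProductSpace ℝ H] [CompleteSpace H]
    {W : Type*} [MeasurableSpace W]
    (η : Measure W) [IsProbabilityMeasure η]
    (lam B : ℝ) (hlam : 0 < lam)
    (φ : W → H) (hφm : StronglyMeasurable φ) (hφb : ∀ w, ‖φ w‖ ≤ B)
    (y h₀ : H)
    (hfix : lam • h₀ + ∫ w, ⟪φ w, h₀⟫ • φ w ∂η = y) :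
    (∀ f : W → ℝ, Measurable f → Integrable (fun w => f w ^ 2) η →
      lam / 2 * ⟪y, h₀⟫
        ≤ 1 / 2 * ‖(∫ w, f w • φ w ∂η) - y‖ ^ 2 + lam / 2 * ∫ w, f w ^ 2 ∂η) ∧
    1 / 2 * ‖(∫ w, ⟪h₀, φ w⟫ • φ w ∂η) - y‖ ^ 2
        + lam / 2 * ∫ w, ⟪h₀, φ w⟫ ^ 2 ∂η
      = lam / 2 * ⟪y, h₀⟫ :=
  ⟨fun _ hfm hf2 =>
      le_ridgeObjective hlam.le hφm.aestronglyMeasurable hφb hfix hfm.aestronglyMeasurable hf2,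
    ridgeObjective_inner_eq hφm.aestronglyMeasurable hφb hfix⟩

/-- core of Proposition E.1: kernel ridge regression value formula.
If `h₀` satisfies `λ h₀ + ∫ ⟪φ w, h₀⟫ • φ w dη = y` (i.e. `h₀ = (K_η + λ Id)⁻¹ y`), then for
every measurable `f` with `∫ f² dη < ∞`,
`(1/2)‖∫ f(w) φ(w) dη − y‖² + (λ/2)∫ f² dη ≥ (λ/2)⟪y, h₀⟫`,
with equality at `f(w) = ⟪h₀, φ(w)⟫`. -/
theorem stmt_13 {H : Type*} [NormedAddCommGroup H] [InnerProductSpace ℝ H] [CompleteSpace H]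
    {W : Type*} [MeasurableSpace W]
    (η : Measure W) [IsProbabilityMeasure η]
    (lam B : ℝ) (hlam : 0 < lam) (hB : 0 ≤ B)
    (φ : W → H) (hφm : StronglyMeasurable φ) (hφb : ∀ w, ‖φ w‖ ≤ B)
    (y h₀ : H)
    (hfix : lam • h₀ + ∫ w, ⟪φ w, h₀⟫ • φ w ∂η = y) :
    (∀ f : W → ℝ, Measurable f → Integrable (fun w => f w ^ 2) η →
      lam / 2 * ⟪y, h₀⟫
        ≤ 1 / 2 * ‖(∫ w, f w • φ w ∂η) - y‖ ^ 2 + lam / 2 * ∫ w, f w ^ 2 ∂η) ∧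
    1 / 2 * ‖(∫ w, ⟪h₀, φ w⟫ • φ w ∂η) - y‖ ^ 2
        + lam / 2 * ∫ w, ⟪h₀, φ w⟫ ^ 2 ∂η
      = lam / 2 * ⟪y, h₀⟫ :=
  stmt_13_general η lam B hlam φ hφm hφb y h₀ hfix
end

section
/- Let c₁, C₁, C₃, C₄ > 0. There exists α > 0, depending only on c₁, C₁, C₃, C₄, such that the following holds. Let g : ℝ → ℝ be continuously differentiable on [−1,1] and three times differentiable on (−1,1), with c₁ ≤ g'(r) ≤ C₁ for all r ∈ [−1,1], |g''(r)|·(1−r²)^{1/2} ≤ C₃ and |g'''(r)|·(1−r²)^{3/2} ≤ C₄ for all r ∈ (−1,1). Then for every d ≥ 1, every v in the unit sphere S^d of ℝ^{d+1}, and every Borel probability measure η on S^d: ∫ ( g(1) − g(⟨v,w⟩) ) dη(w) ≥ α·∫ ( arccos⟨v,w⟩ )² dη(w). -/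
open MeasureTheory Set Real
open scoped RealInnerProductSpace

/-! Since `g' ≥ c₁`, the mean value theorem gives `g 1 - g r ≥ c₁ (1 - r)`, and Jordan's
inequality `1 - cos θ ≥ 2θ²/π²` on `[0, π]` turns `1 - r` into `(2/π²) arccos² r`.
Integrating this pointwise bound against `η` gives the claim with `α = 2c₁/π²`. -/

theorem Real.arccos_sq_le_mul_one_sub {r : ℝ} (hr : r ≤ 1) :
    arccos r ^ 2 ≤ π ^ 2 / 2 * (1 - r) := by
  rcases le_or_gt r (-1) with hr₁ | hr₁
  · rw [arccos_of_le_neg_one hr₁]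
    nlinarith [pi_pos]
  · have hcos := cos_le_one_sub_mul_cos_sq
      (abs_le.2 ⟨by linarith [arccos_nonneg r, pi_pos], arccos_le_pi r⟩)
    rw [cos_arccos hr₁.le hr] at hcos
    field_simp at hcos ⊢
    linarith

theorem Convex.mul_sub_le_image_sub_of_le_hasDerivWithinAt {D : Set ℝ} (hD : Convex ℝ D)
    {f f' : ℝ → ℝ} (hf : ContinuousOn f D)
    (hf' : ∀ x ∈ interior D, HasDerivWithinAt f (f' x) (interior D) x) {C : ℝ}
    (hf'_ge : ∀ x ∈ interior D, C ≤ f' x) :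
    ∀ x ∈ D, ∀ y ∈ D, x ≤ y → C * (y - x) ≤ f y - f x :=
  hD.mul_sub_le_image_sub_of_le_deriv hf (fun _ hx ↦ (hf' _ hx).differentiableWithinAt)
    fun x hx ↦ by rw [deriv_eqOn isOpen_interior hf' hx]; exact hf'_ge _ hx

theorem ContinuousOn.integrable_comp_of_ae_mem {α β E : Type*} [MeasurableSpace α]
    [TopologicalSpace β] [MeasurableSpace β] [OpensMeasurableSpace β] [T2Space β]
    [NormedAddCommGroup E] {μ : Measure α} [IsFiniteMeasure μ] {K : Set β} {g : β → E}
    {f : α → β} (hK : IsCompact K) (hg : ContinuousOn g K) (hf : AEMeasurable f μ)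
    (hfK : ∀ᵐ x ∂μ, f x ∈ K) : Integrable (g ∘ f) μ := by
  have hgK : IntegrableOn g K (μ.map f) := hg.integrableOn_compact hK
  refine Integrable.comp_aemeasurable ?_ hf
  rwa [IntegrableOn, Measure.restrict_eq_self_of_ae_mem
    ((ae_map_iff hf hK.measurableSet).2 hfK)] at hgK

theorem real_inner_mem_Icc_of_norm_le_one {F : Type*} [NormedAddCommGroup F]
    [InnerProductSpace ℝ F] {v w : F} (hv : ‖v‖ ≤ 1) (hw : ‖w‖ ≤ 1) :
    ⟪v, w⟫ ∈ Icc (-1 : ℝ) 1 :=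
  abs_le.1 <| (abs_real_inner_le_norm v w).trans <| mul_le_one₀ hv (norm_nonneg w) hw

theorem mul_arccos_sq_le_sub_of_le_hasDerivWithinAt {g g' : ℝ → ℝ} {c : ℝ} (hc : 0 ≤ c)
    (hg : ∀ r ∈ Icc (-1 : ℝ) 1, HasDerivWithinAt g (g' r) (Icc (-1 : ℝ) 1) r)
    (hg'_ge : ∀ r ∈ Icc (-1 : ℝ) 1, c ≤ g' r) {r : ℝ} (hr : r ∈ Icc (-1 : ℝ) 1) :
    2 * c / π ^ 2 * arccos r ^ 2 ≤ g 1 - g r := by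
  have hmvt : c * (1 - r) ≤ g 1 - g r :=
    (convex_Icc (-1 : ℝ) 1).mul_sub_le_image_sub_of_le_hasDerivWithinAt
      (fun x hx ↦ (hg x hx).continuousWithinAt)
      (fun x hx ↦ (hg x (interior_subset hx)).mono interior_subset)
      (fun x hx ↦ hg'_ge x (interior_subset hx)) r hr 1 (right_mem_Icc.2 (by norm_num)) hr.2
  calc 2 * c / π ^ 2 * arccos r ^ 2
      ≤ 2 * c / π ^ 2 * (π ^ 2 / 2 * (1 - r)) := by
        gcongr; exact arccos_sq_le_mul_one_sub hr.2
    _ = c * (1 - r) := by field_simp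
    _ ≤ g 1 - g r := hmvt

theorem stmt_14_general (c₁ C₁ C₃ C₄ : ℝ)
    (hc₁ : 0 < c₁) :
    ∃ α > (0 : ℝ), ∀ g g₁ g₂ g₃ : ℝ → ℝ,
      (∀ r ∈ Set.Icc (-1 : ℝ) 1, HasDerivWithinAt g (g₁ r) (Set.Icc (-1 : ℝ) 1) r) →
      ContinuousOn g₁ (Set.Icc (-1 : ℝ) 1) →
      (∀ r ∈ Set.Ioo (-1 : ℝ) 1, HasDerivAt g₁ (g₂ r) r) →
      (∀ r ∈ Set.Ioo (-1 : ℝ) 1, HasDerivAt g₂ (g₃ r) r) →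
      (∀ r ∈ Set.Icc (-1 : ℝ) 1, c₁ ≤ g₁ r ∧ g₁ r ≤ C₁) →
      (∀ r ∈ Set.Ioo (-1 : ℝ) 1, |g₂ r| * (1 - r ^ 2) ^ ((1 : ℝ) / 2) ≤ C₃) →
      (∀ r ∈ Set.Ioo (-1 : ℝ) 1, |g₃ r| * (1 - r ^ 2) ^ ((3 : ℝ) / 2) ≤ C₄) →
      ∀ d : ℕ, 1 ≤ d →
      ∀ v : EuclideanSpace ℝ (Fin (d + 1)), ‖v‖ = 1 →
      ∀ η : Measure (EuclideanSpace ℝ (Fin (d + 1))), IsProbabilityMeasure η →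
      (∀ᵐ w ∂η, ‖w‖ = 1) →
      α * ∫ w, Real.arccos ⟪v, w⟫ ^ 2 ∂η ≤ ∫ w, (g 1 - g ⟪v, w⟫) ∂η := by
  refine ⟨2 * c₁ / π ^ 2, by positivity, ?_⟩
  intro g g₁ _ _ hg _ _ _ hg₁ _ _ d _ v hv η _ hη
  have hinner : ∀ᵐ w ∂η, ⟪v, w⟫ ∈ Icc (-1 : ℝ) 1 := by
    filter_upwards [hη] with w hw
    exact real_inner_mem_Icc_of_norm_le_one hv.le hw.le
  have hmeas : AEMeasurable (fun w ↦ ⟪v, w⟫) η :=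
    (continuous_const.inner continuous_id).aemeasurable
  have hintA : Integrable (fun w ↦ Real.arccos ⟪v, w⟫ ^ 2) η :=
    (continuous_arccos.pow 2).continuousOn.integrable_comp_of_ae_mem isCompact_Icc hmeas
      hinner
  have hintG : Integrable (fun w ↦ g 1 - g ⟪v, w⟫) η :=
    (integrable_const _).sub <| ContinuousOn.integrable_comp_of_ae_mem isCompact_Icc
      (fun r hr ↦ (hg r hr).continuousWithinAt) hmeas hinner
  rw [← integral_const_mul]
  refine integral_mono_ae (hintA.const_mul _) hintG ?_
  filter_upwards [hinner] with w hw
  exact mul_arccos_sq_le_sub_of_le_hasDerivWithinAt hc₁.le hg (fun r hr ↦ (hg₁ r hr).1) hw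

/-- core inequality of Lemma F.5, weak coercivity.
There is an `α > 0` depending only on `c₁, C₁, C₃, C₄` such that for any `g` that is `C¹` on
`[−1,1]` (with derivative `g₁`) and three times differentiable on `(−1,1)` (with second and
third derivatives `g₂, g₃`) satisfying `c₁ ≤ g₁ ≤ C₁`, `|g₂(r)|(1−r²)^{1/2} ≤ C₃`,
`|g₃(r)|(1−r²)^{3/2} ≤ C₄`, every `d ≥ 1`, every `v ∈ S^d`, and every Borel probability
measure `η` on `S^d`:
`∫ (g(1) − g(⟪v,w⟫)) dη(w) ≥ α ∫ (arccos ⟪v,w⟫)² dη(w)`. -/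
theorem stmt_14 (c₁ C₁ C₃ C₄ : ℝ)
    (hc₁ : 0 < c₁) (hC₁ : 0 < C₁) (hC₃ : 0 < C₃) (hC₄ : 0 < C₄) :
    ∃ α > (0 : ℝ), ∀ g g₁ g₂ g₃ : ℝ → ℝ,
      (∀ r ∈ Set.Icc (-1 : ℝ) 1, HasDerivWithinAt g (g₁ r) (Set.Icc (-1 : ℝ) 1) r) →
      ContinuousOn g₁ (Set.Icc (-1 : ℝ) 1) →
      (∀ r ∈ Set.Ioo (-1 : ℝ) 1, HasDerivAt g₁ (g₂ r) r) →
      (∀ r ∈ Set.Ioo (-1 : ℝ) 1, HasDerivAt g₂ (g₃ r) r) →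
      (∀ r ∈ Set.Icc (-1 : ℝ) 1, c₁ ≤ g₁ r ∧ g₁ r ≤ C₁) →
      (∀ r ∈ Set.Ioo (-1 : ℝ) 1, |g₂ r| * (1 - r ^ 2) ^ ((1 : ℝ) / 2) ≤ C₃) →
      (∀ r ∈ Set.Ioo (-1 : ℝ) 1, |g₃ r| * (1 - r ^ 2) ^ ((3 : ℝ) / 2) ≤ C₄) →
      ∀ d : ℕ, 1 ≤ d →
      ∀ v : EuclideanSpace ℝ (Fin (d + 1)), ‖v‖ = 1 →
      ∀ η : Measure (EuclideanSpace ℝ (Fin (d + 1))), IsProbabilityMeasure η →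
      (∀ᵐ w ∂η, ‖w‖ = 1) →
      α * ∫ w, Real.arccos ⟪v, w⟫ ^ 2 ∂η ≤ ∫ w, (g 1 - g ⟪v, w⟫) ∂η :=
  stmt_14_general c₁ C₁ C₃ C₄ hc₁
end
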